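/- Let X be a chain and let α, β be orientation-preserving full transformations of X. Then α and β are D-related in the monoid OP(X) (i.e. there exists γ ∈ OP(X) such that α R γ and γ L β, where α R γ means ∃ δ, ε ∈ OP(X) with α = γδ and γ = αε, and γ L β means ∃ δ, ε ∈ OP(X) with γ = δβ and β = εγ, composition written left-to-right with the left factor applied first) if and only if there exists a bijection θ : Im(α) → Im(β) that is bicompletable in OP(X). -/

import Mathlib

/-!
Rotate the chain `X` at a lower set `Y`, putting `Yᶜ` first and `Y` after it: a map is
orientation-preserving with ideal `Y` exactly when it is monotone from this rotated chain to `X`.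
Rotating the target of such a monotone map at a lower set can be undone by rotating its source at a
suitable lower set. This gives closure of `OP(X)` under composition and, applied to a section of `f`
on its image, a factorisation `g = f ∘ p` with `p ∈ OP(X)` whenever `Im g ⊆ Im f`.

If `α R γ L β`, say `α = δ ∘ γ`, `γ = ε ∘ α`, then `ε` maps `Im α` onto `Im γ = Im β` with left
inverse `δ`, so it is a bicompletable bijection. Conversely, if `γ` and `δ` complete `θ` and `θ⁻¹`,
then `γ ∘ α` is `R`-related to `α` and has image `θ(Im α) = Im β`, so the factorisation makes it
`L`-related to `β`.
-/

variable {X : Type*}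

/-- The full transformation `f` is order-preserving on the subset `A`. -/
def OrdOn [LinearOrder X] (f : X → X) (A : Set X) : Prop :=
  ∀ ⦃x y : X⦄, x ∈ A → y ∈ A → x ≤ y → f x ≤ f y

/-- `Y` is an ideal of the full transformation `f`. -/
def IsIdealFull [LinearOrder X] (f : X → X) (Y : Set X) : Prop :=
  Y.Nonempty ∧ OrdOn f Y ∧ OrdOn f Yᶜ ∧
    ∀ ⦃a b : X⦄, a ∈ Y → b ∈ Yᶜ → a ≤ b ∧ f b ≤ f a

/-- `f` is an orientation-preserving full transformation. -/
def IsOPFull [LinearOrder X] (f : X → X) : Prop := ∃ Y : Set X, IsIdealFull f Y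

open Set Function

section Rotation

variable [LinearOrder X] {P : Type*} [LinearOrder P]

def RotLE (Z : Set X) (x y : X) : Prop :=
  x ∉ Z ∧ y ∈ Z ∨ (x ∈ Z ↔ y ∈ Z) ∧ x ≤ y

lemma rotLE_refl (Z : Set X) (x : X) : RotLE Z x x :=
  .inr ⟨Iff.rfl, le_rfl⟩

lemma rotLE_total (Z : Set X) (x y : X) : RotLE Z x y ∨ RotLE Z y x := by
  unfold RotLE
  grind

lemma isIdealFull_iff {f : X → X} {Y : Set X} :
    IsIdealFull f Y ↔ Y.Nonempty ∧ IsLowerSet Y ∧ ∀ ⦃x y⦄, RotLE Y x y → f x ≤ f y := by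
  unfold IsIdealFull OrdOn IsLowerSet RotLE
  grind

lemma isOPFull_iff {f : X → X} :
    IsOPFull f ↔ ∃ Y : Set X, Y.Nonempty ∧ IsLowerSet Y ∧ ∀ ⦃x y⦄, RotLE Y x y → f x ≤ f y :=
  exists_congr fun _ => isIdealFull_iff

/- Rotating the target at `Z` is undone by a new cut of the source: if `f` sends a point of `Y`
into `Z`, it sends all of `Yᶜ` into `Z` and the cut is `Y ∩ f⁻¹ Z`; otherwise it is `Y ∪ f⁻¹ Z`. -/
lemma exists_rotLE_imp_rotLE {f : X → P} {Y : Set X} (hYne : Y.Nonempty) (hY : IsLowerSet Y)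
    (hf : ∀ ⦃x y⦄, RotLE Y x y → f x ≤ f y) {Z : Set P} (hZ : IsLowerSet Z) :
    ∃ W : Set X, W.Nonempty ∧ IsLowerSet W ∧ ∀ ⦃x y⦄, RotLE W x y → RotLE Z (f x) (f y) := by
  by_cases h : ∃ a ∈ Y, f a ∈ Z
  · obtain ⟨a, ha, hfa⟩ := h
    have hYc : ∀ d ∉ Y, f d ∈ Z := fun d hd => hZ (hf (.inl ⟨hd, ha⟩)) hfa
    refine ⟨Y ∩ f ⁻¹' Z, ⟨a, ha, hfa⟩, ?_, ?_⟩ <;>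
      unfold RotLE IsLowerSet at * <;> grind
  · push Not at h
    refine ⟨Y ∪ f ⁻¹' Z, hYne.mono subset_union_left, ?_, ?_⟩ <;>
      unfold RotLE IsLowerSet at * <;> grind

/- The mirror image of `exists_rotLE_imp_rotLE`: the order of `P` is `RotLE Z` rotated at `Zᶜ`. -/
lemma exists_rotLE_imp_le {f : X → P} {Y : Set X} (hYne : Y.Nonempty) (hY : IsLowerSet Y)
    {Z : Set P} (hZ : IsLowerSet Z) (hf : ∀ ⦃x y⦄, RotLE Y x y → RotLE Z (f x) (f y)) :
    ∃ W : Set X, W.Nonempty ∧ IsLowerSet W ∧ ∀ ⦃x y⦄, RotLE W x y → f x ≤ f y := by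
  by_cases h : ∃ a ∈ Y, f a ∉ Z
  · obtain ⟨a, ha, hfa⟩ := h
    have hYc : ∀ d ∉ Y, f d ∉ Z := fun d hd hfd => by
      have := hf (.inl ⟨hd, ha⟩)
      unfold RotLE at this
      tauto
    refine ⟨Y ∩ f ⁻¹' Zᶜ, ⟨a, ha, hfa⟩, ?_, ?_⟩ <;>
      unfold RotLE IsLowerSet at * <;> grind
  · push Not at h
    refine ⟨Y ∪ f ⁻¹' Zᶜ, hYne.mono subset_union_left, ?_, ?_⟩ <;>
      unfold RotLE IsLowerSet at * <;> grind

lemma rotLE_invFun_of_le [Nonempty X] {f : X → P} {Z : Set X}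
    (hf : ∀ ⦃x y⦄, RotLE Z x y → f x ≤ f y)
    {v w : P} (hv : v ∈ range f) (hw : w ∈ range f) (hvw : v ≤ w) :
    RotLE Z (invFun f v) (invFun f w) := by
  rcases rotLE_total Z (invFun f v) (invFun f w) with h | h
  · exact h
  · have hwv : w ≤ v := by simpa only [invFun_eq hv, invFun_eq hw] using hf h
    rw [le_antisymm hvw hwv]
    exact rotLE_refl Z _

end Rotation

section OP

variable [LinearOrder X]

theorem IsOPFull.comp {f g : X → X} (hf : IsOPFull f) (hg : IsOPFull g) : IsOPFull (g ∘ f) := by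
  obtain ⟨Y, hYne, hY, hfY⟩ := isOPFull_iff.1 hf
  obtain ⟨Z, -, hZ, hgZ⟩ := isOPFull_iff.1 hg
  obtain ⟨W, hWne, hW, hfW⟩ := exists_rotLE_imp_rotLE hYne hY hfY hZ
  exact isOPFull_iff.2 ⟨W, hWne, hW, fun _ _ h => hgZ (hfW h)⟩

theorem IsOPFull.exists_comp_eq_of_range_subset {f g : X → X} (hf : IsOPFull f)
    (hg : IsOPFull g) (hgf : range g ⊆ range f) : ∃ p : X → X, IsOPFull p ∧ f ∘ p = g := by
  obtain ⟨Z, -, hZ, hfZ⟩ := isOPFull_iff.1 hf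
  obtain ⟨U, hUne, hU, hgU⟩ := isOPFull_iff.1 hg
  have : Nonempty X := hUne.to_subtype.map Subtype.val
  obtain ⟨W, hWne, hW, hp⟩ := exists_rotLE_imp_le (f := invFun f ∘ g) hUne hU hZ
    fun x y hxy => rotLE_invFun_of_le hfZ (hgf ⟨x, rfl⟩) (hgf ⟨y, rfl⟩) (hgU hxy)
  exact ⟨invFun f ∘ g, isOPFull_iff.2 ⟨W, hWne, hW, hp⟩, funext fun x => invFun_eq (hgf ⟨x, rfl⟩)⟩

end OP

lemma range_eq_of_comp_eq {A B C : Type*} {γ : A → C} {β : B → C} {δ : A → B} {ε : B → A}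
    (hγ : γ = β ∘ δ) (hβ : β = γ ∘ ε) : range γ = range β := by
  apply Subset.antisymm
  · rw [hγ]; exact range_comp_subset_range δ β
  · rw [hβ]; exact range_comp_subset_range ε γ

lemma bijOn_range_and_leftInvOn_of_comp_eq {A B C : Type*} {α : A → B} {γ : A → C}
    {δ : C → B} {ε : B → C}
    (hα : α = δ ∘ γ) (hγ : γ = ε ∘ α) :
    BijOn ε (range α) (range γ) ∧ LeftInvOn δ ε (range α) := by
  have hinv : LeftInvOn δ ε (range α) := by
    rintro _ ⟨x, rfl⟩
    calc δ (ε (α x)) = δ (γ x) := by rw [hγ, comp_apply]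
      _ = α x := by rw [hα, comp_apply]
  refine ⟨?_, hinv⟩
  rw [hγ, range_comp]
  exact hinv.injOn.bijOn_image

/-- Green's relation `D` in `OP(X)`: `α D β` iff there is a bijection
`θ : Im α → Im β` that is bicompletable in `OP(X)`. -/
theorem stmt13 (X : Type*) [LinearOrder X] (α β : X → X)
    (hα : IsOPFull α) (hβ : IsOPFull β) :
    (∃ γ : X → X, IsOPFull γ ∧
      (∃ δ ε : X → X, IsOPFull δ ∧ IsOPFull ε ∧ α = δ ∘ γ ∧ γ = ε ∘ α) ∧
      (∃ δ ε : X → X, IsOPFull δ ∧ IsOPFull ε ∧ γ = β ∘ δ ∧ β = γ ∘ ε)) ↔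
    (∃ θ : X → X, Set.BijOn θ (Set.range α) (Set.range β) ∧
      (∃ γ : X → X, IsOPFull γ ∧ ∀ a ∈ Set.range α, γ a = θ a) ∧
      (∃ δ : X → X, IsOPFull δ ∧ ∀ a ∈ Set.range α, δ (θ a) = a)) := by
  constructor
  · rintro ⟨γ, -, ⟨δ, ε, hδ, hε, hαγ, hγα⟩, ⟨_, _, -, -, hγβ, hβγ⟩⟩
    obtain ⟨hbij, hinv⟩ := bijOn_range_and_leftInvOn_of_comp_eq hαγ hγα
    exact ⟨ε, range_eq_of_comp_eq hγβ hβγ ▸ hbij, ⟨ε, hε, fun _ _ => rfl⟩, ⟨δ, hδ, hinv⟩⟩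
  · rintro ⟨θ, hθ, ⟨γ, hγ, hγθ⟩, ⟨δ, hδ, hδθ⟩⟩
    have hγα := hα.comp hγ
    have hrange : range (γ ∘ α) = range β := by
      rw [range_comp, EqOn.image_eq hγθ, hθ.image_eq]
    obtain ⟨p, hp, hβp⟩ := hβ.exists_comp_eq_of_range_subset hγα hrange.subset
    obtain ⟨q, hq, hγαq⟩ := hγα.exists_comp_eq_of_range_subset hβ hrange.superset
    refine ⟨γ ∘ α, hγα, ⟨δ, γ, hδ, hγ, funext fun x => ?_, rfl⟩,
      ⟨p, q, hp, hq, hβp.symm, hγαq.symm⟩⟩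
    show α x = δ (γ (α x))
    rw [hγθ (α x) ⟨x, rfl⟩, hδθ (α x) ⟨x, rfl⟩]
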